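/- arXiv:2601.12439 — 2 statements merged into one kernel-verified Lean document; each statement's English description precedes it below -/
import Mathlib

section
/- The class of equivalence relations with all classes of size at most two has the amalgamation property: suppose E₀, E₁, E₂ are equivalence relations on sets S₀ ⊆ S₁ and S₀ ⊆ S₂ respectively, all with classes of size at most 2, and E₁ and E₂ both restrict to E₀ on S₀. Then there exist a set S, an equivalence relation E on S with all classes of size at most 2, and injective maps f₁ : S₁ → S, f₂ : S₂ → S that agree on S₀ and each preserve and reflect the equivalence relation. -/
/-!
On `S₁ ⊕ S₂`, the relations `E₁`, `E₂` and "`a` and `b` are equivalent to a common point of `S₀`"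
form an equivalence relation, because `E₁` and `E₂` agree on `S₀`. Its classes can have four
elements, but they fall into at most two pieces once each point of `S₀` is glued to its copy
and `a ∈ S₁ \ S₀` is glued to `b ∈ S₂ \ S₀` whenever both are partners of the same point of `S₀`.
This works because a class of size at most two contains at most one partner of a given point.
The amalgam is the quotient of `S₁ ⊕ S₂` by the gluing, with the induced relation.
-/

open Set

theorem Set.encard_le_two_iff {α : Type*} {s : Set α} :
    s.encard ≤ 2 ↔ ∀ a ∈ s, ∀ b ∈ s, ∀ c ∈ s, a = b ∨ a = c ∨ b = c := by
  constructor
  · intro hs a ha b hb c hc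
    by_contra! ⟨hab, hac, hbc⟩
    have h3 : ({a, b, c} : Set α).encard = 3 := encard_eq_three.2 ⟨a, b, c, hab, hac, hbc, rfl⟩
    have := h3 ▸ encard_mono (insert_subset ha (insert_subset hb (singleton_subset_iff.2 hc)))
    exact absurd (this.trans hs) (by norm_num)
  · intro h
    by_contra! hs
    obtain ⟨t, hts, ht⟩ := exists_subset_encard_eq (Order.add_one_le_of_lt hs)
    obtain ⟨a, b, c, hab, hac, hbc, rfl⟩ := encard_eq_three.1 ht
    simp only [insert_subset_iff, singleton_subset_iff] at hts
    obtain ⟨ha, hb, hc⟩ := hts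
    exact (h a ha b hb c hc).elim hab (Or.elim · hac hbc)

theorem Equivalence.eq_of_ne_of_ne {α : Type*} {r : α → α → Prop} (hr : Equivalence r)
    (hs : ∀ x, {y | r x y}.encard ≤ 2) {x y z : α} (hy : r x y) (hz : r x z)
    (hxy : x ≠ y) (hxz : x ≠ z) : y = z :=
  ((encard_le_two_iff.1 (hs x) x (hr.refl x) y hy z hz).resolve_left hxy).resolve_left hxz

namespace Sum

variable {α β : Type*}

def BlockRel (r : α → α → Prop) (s : β → β → Prop) (c : α → β → Prop) : α ⊕ β → α ⊕ β → Prop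
  | inl a, inl a' => r a a'
  | inl a, inr b => c a b
  | inr b, inl a => c a b
  | inr b, inr b' => s b b'

variable {r : α → α → Prop} {s : β → β → Prop} {c : α → β → Prop}

theorem BlockRel.mono {r' : α → α → Prop} {s' : β → β → Prop} {c' : α → β → Prop}
    (hr : r ≤ r') (hs : s ≤ s') (hc : c ≤ c') : BlockRel r s c ≤ BlockRel r' s' c'
  | inl _, inl _, h => hr _ _ h
  | inl _, inr _, h => hc _ _ h
  | inr _, inl _, h => hc _ _ h
  | inr _, inr _, h => hs _ _ h

theorem BlockRel.equivalence (hr : Equivalence r) (hs : Equivalence s)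
    (hrc : ∀ {a a' b}, r a a' → c a b → c a' b) (hcs : ∀ {a b b'}, c a b → s b b' → c a b')
    (hcr : ∀ {a a' b}, c a b → c a' b → r a a') (hcs' : ∀ {a b b'}, c a b → c a b' → s b b') :
    Equivalence (BlockRel r s c) where
  refl
    | inl a => hr.refl a
    | inr b => hs.refl b
  symm {u v} h := by
    cases u <;> cases v
    exacts [hr.symm h, h, h, hs.symm h]
  trans {u v w} huv hvw := by
    cases u <;> cases v <;> cases w
    exacts [hr.trans huv hvw, hrc (hr.symm huv) hvw, hcr huv hvw, hcs huv hvw,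
      hrc hvw huv, hcs' huv hvw, hcs hvw (hs.symm huv), hs.trans huv hvw]

end Sum

theorem Setoid.encard_fiber_le_two {α : Type*} {r s : Setoid α} (h : r ≤ s)
    (H : ∀ u v w, s u v → s u w → s v w → r u v ∨ r u w ∨ r v w) (x : Quotient r) :
    {y | Quotient.map id h x = Quotient.map id h y}.encard ≤ 2 := by
  refine encard_le_two_iff.2 fun y hy z hz w hw => ?_
  induction x using Quotient.inductionOn with | _ t
  induction y using Quotient.inductionOn with | _ u
  induction z using Quotient.inductionOn with | _ v
  induction w using Quotient.inductionOn with | _ w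
  have hu : s t u := Quotient.eq.1 hy
  have hv : s t v := Quotient.eq.1 hz
  have hw : s t w := Quotient.eq.1 hw
  exact (H u v w (s.trans' (s.symm' hu) hv) (s.trans' (s.symm' hu) hw)
    (s.trans' (s.symm' hv) hw)).imp Quotient.sound (Or.imp Quotient.sound Quotient.sound)

namespace Amalgamation

variable {U : Type*} {S₀ S₁ S₂ : Set U} (h01 : S₀ ⊆ S₁) (h02 : S₀ ⊆ S₂)
  (E₁ : S₁ → S₁ → Prop) (E₂ : S₂ → S₂ → Prop)

def Linked (a : S₁) (b : S₂) : Prop :=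
  ∃ c : S₀, E₁ (inclusion h01 c) a ∧ E₂ (inclusion h02 c) b

/-- Either `a` and `b` are the same point of `S₀`, or neither lies in `S₀` and both are partners
of a common point of `S₀`. -/
def Glued (a : S₁) (b : S₂) : Prop :=
  Linked h01 h02 E₁ E₂ a b ∧ ∀ c : S₀, inclusion h01 c = a ↔ inclusion h02 c = b

variable {h01 h02 E₁ E₂} {a a' : S₁} {b b' : S₂}

theorem linked_comm : Linked h02 h01 E₂ E₁ b a ↔ Linked h01 h02 E₁ E₂ a b :=
  exists_congr fun _ => and_comm

theorem glued_comm : Glued h02 h01 E₂ E₁ b a ↔ Glued h01 h02 E₁ E₂ a b :=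
  and_congr linked_comm (forall_congr' fun _ => Iff.comm)

theorem glued_inclusion (hE₁ : Equivalence E₁) (hE₂ : Equivalence E₂) (c : S₀) :
    Glued h01 h02 E₁ E₂ (inclusion h01 c) (inclusion h02 c) :=
  ⟨⟨c, hE₁.refl _, hE₂.refl _⟩, fun _ =>
    (inclusion_injective h01).eq_iff.trans (inclusion_injective h02).eq_iff.symm⟩

theorem rel_of_linked_of_linked (hE₁ : Equivalence E₁) (hE₂ : Equivalence E₂)
    (hr : ∀ x y : S₀, E₂ (inclusion h02 x) (inclusion h02 y) →
      E₁ (inclusion h01 x) (inclusion h01 y)) :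
    Linked h01 h02 E₁ E₂ a b → Linked h01 h02 E₁ E₂ a' b → E₁ a a'
  | ⟨c, hca, hcb⟩, ⟨c', hca', hcb'⟩ =>
    hE₁.trans (hE₁.symm hca) (hE₁.trans (hr c c' (hE₂.trans hcb (hE₂.symm hcb'))) hca')

theorem inclusion_eq_of_inclusion_eq (hE₂ : Equivalence E₂)
    (hs₂ : ∀ x, {y | E₂ x y}.encard ≤ 2)
    (hr : ∀ x y : S₀, E₁ (inclusion h01 x) (inclusion h01 y) →
      E₂ (inclusion h02 x) (inclusion h02 y))
    {c d : S₀} (ha : E₁ (inclusion h01 c) a) (hb : E₂ (inclusion h02 c) b)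
    (hca : inclusion h01 c ≠ a) (hcb : inclusion h02 c ≠ b) (hd : inclusion h01 d = a) :
    inclusion h02 d = b := by
  subst hd
  exact hE₂.eq_of_ne_of_ne hs₂ (hr c d ha) hb
    (fun h => hca (congrArg _ (inclusion_injective h02 h))) hcb

theorem glued_of_ne_of_ne (hE₁ : Equivalence E₁) (hs₁ : ∀ x, {y | E₁ x y}.encard ≤ 2)
    (hE₂ : Equivalence E₂) (hs₂ : ∀ x, {y | E₂ x y}.encard ≤ 2)
    (hr : ∀ x y : S₀, E₁ (inclusion h01 x) (inclusion h01 y) ↔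
      E₂ (inclusion h02 x) (inclusion h02 y))
    {c : S₀} (ha : E₁ (inclusion h01 c) a) (hb : E₂ (inclusion h02 c) b)
    (hca : inclusion h01 c ≠ a) (hcb : inclusion h02 c ≠ b) : Glued h01 h02 E₁ E₂ a b :=
  ⟨⟨c, ha, hb⟩, fun _ =>
    ⟨inclusion_eq_of_inclusion_eq hE₂ hs₂ (fun x y => (hr x y).1) ha hb hca hcb,
      inclusion_eq_of_inclusion_eq hE₁ hs₁ (fun x y => (hr x y).2) hb ha hcb hca⟩⟩

theorem Glued.right_unique (hE₁ : Equivalence E₁) (hs₁ : ∀ x, {y | E₁ x y}.encard ≤ 2)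
    (hE₂ : Equivalence E₂) (hs₂ : ∀ x, {y | E₂ x y}.encard ≤ 2)
    (h : Glued h01 h02 E₁ E₂ a b) (h' : Glued h01 h02 E₁ E₂ a b') : b = b' := by
  by_cases ha : ∃ c, inclusion h01 c = a
  · obtain ⟨c, rfl⟩ := ha
    exact ((h.2 c).1 rfl).symm.trans ((h'.2 c).1 rfl)
  push Not at ha
  obtain ⟨⟨c, hca, hcb⟩, hc⟩ := h
  obtain ⟨⟨c', hca', hcb'⟩, hc'⟩ := h'
  obtain rfl : c = c' := inclusion_injective h01 <|
    hE₁.eq_of_ne_of_ne hs₁ (hE₁.symm hca) (hE₁.symm hca') (ha c).symm (ha c').symm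
  exact hE₂.eq_of_ne_of_ne hs₂ hcb hcb' (fun h => ha c ((hc c).2 h)) (fun h => ha c ((hc' c).2 h))

theorem Glued.left_unique (hE₁ : Equivalence E₁) (hs₁ : ∀ x, {y | E₁ x y}.encard ≤ 2)
    (hE₂ : Equivalence E₂) (hs₂ : ∀ x, {y | E₂ x y}.encard ≤ 2)
    (h : Glued h01 h02 E₁ E₂ a b) (h' : Glued h01 h02 E₁ E₂ a' b) : a = a' :=
  Glued.right_unique hE₂ hs₂ hE₁ hs₁ (glued_comm.2 h) (glued_comm.2 h')

theorem eq_or_glued_or_glued_of_inclusion (hE₁ : Equivalence E₁)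
    (hs₁ : ∀ x, {y | E₁ x y}.encard ≤ 2) (hE₂ : Equivalence E₂)
    (hs₂ : ∀ x, {y | E₂ x y}.encard ≤ 2)
    (hr : ∀ x y : S₀, E₁ (inclusion h01 x) (inclusion h01 y) ↔
      E₂ (inclusion h02 x) (inclusion h02 y))
    {c : S₀} (ha : E₁ (inclusion h01 c) a) (hb : E₂ (inclusion h02 c) b) :
    inclusion h01 c = a ∨ Glued h01 h02 E₁ E₂ (inclusion h01 c) b ∨ Glued h01 h02 E₁ E₂ a b := by
  by_cases hca : inclusion h01 c = a
  · exact Or.inl hca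
  by_cases hcb : inclusion h02 c = b
  · subst hcb
    exact Or.inr (Or.inl (glued_inclusion hE₁ hE₂ c))
  exact Or.inr (Or.inr (glued_of_ne_of_ne hE₁ hs₁ hE₂ hs₂ hr ha hb hca hcb))

theorem eq_or_glued_or_glued (hE₁ : Equivalence E₁)
    (hs₁ : ∀ x, {y | E₁ x y}.encard ≤ 2) (hE₂ : Equivalence E₂)
    (hs₂ : ∀ x, {y | E₂ x y}.encard ≤ 2)
    (hr : ∀ x y : S₀, E₁ (inclusion h01 x) (inclusion h01 y) ↔
      E₂ (inclusion h02 x) (inclusion h02 y))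
    (haa' : E₁ a a') (hab : Linked h01 h02 E₁ E₂ a b) :
    a = a' ∨ Glued h01 h02 E₁ E₂ a b ∨ Glued h01 h02 E₁ E₂ a' b := by
  obtain ⟨c, hca, hcb⟩ := hab
  rcases encard_le_two_iff.1 (hs₁ _) _ (hE₁.refl _) a hca a' (hE₁.trans hca haa') with
    rfl | rfl | h
  · exact eq_or_glued_or_glued_of_inclusion hE₁ hs₁ hE₂ hs₂ hr (hE₁.trans hca haa') hcb
  · exact (eq_or_glued_or_glued_of_inclusion hE₁ hs₁ hE₂ hs₂ hr hca hcb).elim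
      (Or.inl ∘ Eq.symm) (Or.inr ∘ Or.symm)
  · exact Or.inl h

variable (h01 h02 E₁ E₂)

def linkedSetoid (hE₁ : Equivalence E₁) (hE₂ : Equivalence E₂)
    (hr : ∀ x y : S₀, E₁ (inclusion h01 x) (inclusion h01 y) ↔
      E₂ (inclusion h02 x) (inclusion h02 y)) : Setoid (S₁ ⊕ S₂) where
  r := Sum.BlockRel E₁ E₂ (Linked h01 h02 E₁ E₂)
  iseqv := Sum.BlockRel.equivalence hE₁ hE₂
    (fun h ⟨c, hca, hcb⟩ => ⟨c, hE₁.trans hca h, hcb⟩)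
    (fun ⟨c, hca, hcb⟩ h => ⟨c, hca, hE₂.trans hcb h⟩)
    (rel_of_linked_of_linked hE₁ hE₂ fun x y => (hr x y).2)
    (fun h h' => rel_of_linked_of_linked hE₂ hE₁ (fun x y => (hr x y).1)
      (linked_comm.2 h) (linked_comm.2 h'))

def gluedSetoid (hE₁ : Equivalence E₁) (hs₁ : ∀ x, {y | E₁ x y}.encard ≤ 2)
    (hE₂ : Equivalence E₂) (hs₂ : ∀ x, {y | E₂ x y}.encard ≤ 2) : Setoid (S₁ ⊕ S₂) where
  r := Sum.BlockRel Eq Eq (Glued h01 h02 E₁ E₂)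
  iseqv := Sum.BlockRel.equivalence eq_equivalence eq_equivalence
    (fun h hab => h ▸ hab) (fun hab h => h ▸ hab)
    (Glued.left_unique hE₁ hs₁ hE₂ hs₂) (Glued.right_unique hE₁ hs₁ hE₂ hs₂)

variable {h01 h02 E₁ E₂}

theorem gluedSetoid_le_linkedSetoid (hE₁ : Equivalence E₁)
    (hs₁ : ∀ x, {y | E₁ x y}.encard ≤ 2) (hE₂ : Equivalence E₂)
    (hs₂ : ∀ x, {y | E₂ x y}.encard ≤ 2)
    (hr : ∀ x y : S₀, E₁ (inclusion h01 x) (inclusion h01 y) ↔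
      E₂ (inclusion h02 x) (inclusion h02 y)) :
    gluedSetoid h01 h02 E₁ E₂ hE₁ hs₁ hE₂ hs₂ ≤ linkedSetoid h01 h02 E₁ E₂ hE₁ hE₂ hr :=
  Setoid.le_iff_rel_le.2 <| Sum.BlockRel.mono (fun a _ h => h ▸ hE₁.refl a)
    (fun b _ h => h ▸ hE₂.refl b) (fun _ _ h => h.1)

theorem gluedSetoid_rel_or_rel_or_rel (hE₁ : Equivalence E₁)
    (hs₁ : ∀ x, {y | E₁ x y}.encard ≤ 2) (hE₂ : Equivalence E₂)
    (hs₂ : ∀ x, {y | E₂ x y}.encard ≤ 2)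
    (hr : ∀ x y : S₀, E₁ (inclusion h01 x) (inclusion h01 y) ↔
      E₂ (inclusion h02 x) (inclusion h02 y)) (u v w : S₁ ⊕ S₂)
    (huv : linkedSetoid h01 h02 E₁ E₂ hE₁ hE₂ hr u v)
    (huw : linkedSetoid h01 h02 E₁ E₂ hE₁ hE₂ hr u w)
    (hvw : linkedSetoid h01 h02 E₁ E₂ hE₁ hE₂ hr v w) :
    gluedSetoid h01 h02 E₁ E₂ hE₁ hs₁ hE₂ hs₂ u v ∨ gluedSetoid h01 h02 E₁ E₂ hE₁ hs₁ hE₂ hs₂ u w ∨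
      gluedSetoid h01 h02 E₁ E₂ hE₁ hs₁ hE₂ hs₂ v w := by
  have left {a a' b} (haa' : E₁ a a') (hab : Linked h01 h02 E₁ E₂ a b) :=
    eq_or_glued_or_glued hE₁ hs₁ hE₂ hs₂ hr haa' hab
  have right {a b b'} (hbb' : E₂ b b') (hab : Linked h01 h02 E₁ E₂ a b) :=
    (eq_or_glued_or_glued hE₂ hs₂ hE₁ hs₁ (fun x y => (hr x y).symm) hbb'
      (linked_comm.2 hab)).imp_right (Or.imp glued_comm.1 glued_comm.1)
  rcases u with a | b <;> rcases v with a' | b' <;> rcases w with a'' | b''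
  · exact encard_le_two_iff.1 (hs₁ a) a (hE₁.refl a) a' huv a'' huw
  · exact left huv huw
  · have := left huw huv
    tauto
  · have := right hvw huv
    tauto
  · have := left hvw huv
    tauto
  · have := right huw huv
    tauto
  · have := right huv huw
    tauto
  · exact encard_le_two_iff.1 (hs₂ b) b (hE₂.refl b) b' huv b'' huw

end Amalgamation

open Amalgamation

theorem stmt_3_general {U : Type u} (S₀ S₁ S₂ : Set U) (h01 : S₀ ⊆ S₁) (h02 : S₀ ⊆ S₂)
    (E₀ : S₀ → S₀ → Prop) (E₁ : S₁ → S₁ → Prop) (E₂ : S₂ → S₂ → Prop)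
    (hE₁ : Equivalence E₁) (hE₂ : Equivalence E₂)
    (hs₁ : ∀ x, Set.encard {y | E₁ x y} ≤ 2)
    (hs₂ : ∀ x, Set.encard {y | E₂ x y} ≤ 2)
    (hr₁ : ∀ x y : S₀, E₀ x y ↔ E₁ (Set.inclusion h01 x) (Set.inclusion h01 y))
    (hr₂ : ∀ x y : S₀, E₀ x y ↔ E₂ (Set.inclusion h02 x) (Set.inclusion h02 y)) :
    ∃ (S : Type u) (E : S → S → Prop), Equivalence E ∧
      (∀ x, Set.encard {y | E x y} ≤ 2) ∧
      ∃ (f₁ : S₁ → S) (f₂ : S₂ → S), Function.Injective f₁ ∧ Function.Injective f₂ ∧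
        (∀ x y, E₁ x y ↔ E (f₁ x) (f₁ y)) ∧ (∀ x y, E₂ x y ↔ E (f₂ x) (f₂ y)) ∧
        (∀ x : S₀, f₁ (Set.inclusion h01 x) = f₂ (Set.inclusion h02 x)) := by
  have hr x y := (hr₁ x y).symm.trans (hr₂ x y)
  let e := linkedSetoid h01 h02 E₁ E₂ hE₁ hE₂ hr
  let ρ := gluedSetoid h01 h02 E₁ E₂ hE₁ hs₁ hE₂ hs₂
  have hρe : ρ ≤ e := gluedSetoid_le_linkedSetoid hE₁ hs₁ hE₂ hs₂ hr
  let π : Quotient ρ → Quotient e := Quotient.map id hρe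
  refine ⟨Quotient ρ, fun x y => π x = π y, ⟨fun _ => rfl, Eq.symm, Eq.trans⟩,
    Setoid.encard_fiber_le_two hρe (gluedSetoid_rel_or_rel_or_rel hE₁ hs₁ hE₂ hs₂ hr),
    fun a => ⟦.inl a⟧, fun b => ⟦.inr b⟧, fun _ _ h => Quotient.exact h,
    fun _ _ h => Quotient.exact h,
    fun a a' => (Quotient.eq (r := e) (x := .inl a) (y := .inl a')).symm,
    fun b b' => (Quotient.eq (r := e) (x := .inr b) (y := .inr b')).symm,
    fun c => Quotient.sound (glued_inclusion hE₁ hE₂ c)⟩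

/-- Amalgamation property for equivalence relations with classes of size at most 2. -/
theorem stmt_3 {U : Type u} (S₀ S₁ S₂ : Set U) (h01 : S₀ ⊆ S₁) (h02 : S₀ ⊆ S₂)
    (E₀ : S₀ → S₀ → Prop) (E₁ : S₁ → S₁ → Prop) (E₂ : S₂ → S₂ → Prop)
    (hE₀ : Equivalence E₀) (hE₁ : Equivalence E₁) (hE₂ : Equivalence E₂)
    (hs₀ : ∀ x, Set.encard {y | E₀ x y} ≤ 2)
    (hs₁ : ∀ x, Set.encard {y | E₁ x y} ≤ 2)
    (hs₂ : ∀ x, Set.encard {y | E₂ x y} ≤ 2)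
    (hr₁ : ∀ x y : S₀, E₀ x y ↔ E₁ (Set.inclusion h01 x) (Set.inclusion h01 y))
    (hr₂ : ∀ x y : S₀, E₀ x y ↔ E₂ (Set.inclusion h02 x) (Set.inclusion h02 y)) :
    ∃ (S : Type u) (E : S → S → Prop), Equivalence E ∧
      (∀ x, Set.encard {y | E x y} ≤ 2) ∧
      ∃ (f₁ : S₁ → S) (f₂ : S₂ → S), Function.Injective f₁ ∧ Function.Injective f₂ ∧
        (∀ x y, E₁ x y ↔ E (f₁ x) (f₁ y)) ∧ (∀ x y, E₂ x y ↔ E (f₂ x) (f₂ y)) ∧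
        (∀ x : S₀, f₁ (Set.inclusion h01 x) = f₂ (Set.inclusion h02 x)) :=
  stmt_3_general S₀ S₁ S₂ h01 h02 E₀ E₁ E₂ hE₁ hE₂ hs₁ hs₂ hr₁ hr₂
end

section
/- Disjoint amalgamation fails in the class of equivalence relations with classes of size at most two: let X be a set with 0 ∈ X and 1, 2 ∉ X (with 1 ≠ 2), let E₀ be the identity relation on X, and for l = 1, 2 let Eₗ be the equivalence relation on X ∪ {l} whose only nontrivial class is {0, l}. Then for any set S, any equivalence relation E on S with all classes of size at most 2, and any injective maps f₁ : X ∪ {1} → S, f₂ : X ∪ {2} → S that agree on X and preserve and reflect the equivalence relations, we must have f₁(1) = f₂(2); in particular f₁[X ∪ {1}] ∩ f₂[X ∪ {2}] ≠ f₁[X]. -/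
/-! The common image of `0` is related to both `f₁ 1` and `f₂ 2`, and injectivity makes each of
them different from it; as its class has at most two elements, `f₁ 1 = f₂ 2`. This point lies in
both ranges but not in `f₁[X]`. -/

theorem Set.eq_of_encard_le_two {α : Type*} {s : Set α} (hs : s.encard ≤ 2) {x y z : α}
    (hx : x ∈ s) (hy : y ∈ s) (hz : z ∈ s) (hxy : x ≠ y) (hxz : x ≠ z) : y = z := by
  by_contra hyz
  have hthree : ({x, y, z} : Set α).encard = 3 := encard_eq_three.2 ⟨x, y, z, hxy, hxz, hyz, rfl⟩
  have hle := (encard_mono (insert_subset hx (insert_subset hy (singleton_subset_iff.2 hz)))).trans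
    hs
  rw [hthree] at hle
  exact absurd hle (by norm_num)

theorem stmt_4_general {U : Type u} (X : Set U) (x0 : U) (hx0 : x0 ∈ X)
    (a1 a2 : U) (ha1 : a1 ∉ X) (ha2 : a2 ∉ X)
    (S : Type v) (E : S → S → Prop)
    (hsmall : ∀ x, Set.encard {y | E x y} ≤ 2)
    (f₁ : (X ∪ {a1} : Set U) → S) (f₂ : (X ∪ {a2} : Set U) → S)
    (hinj₁ : Function.Injective f₁) (hinj₂ : Function.Injective f₂)
    (hagree : ∀ (x : U) (hx : x ∈ X),
      f₁ ⟨x, Set.mem_union_left _ hx⟩ = f₂ ⟨x, Set.mem_union_left _ hx⟩)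
    (hpr₁ : ∀ x y : (X ∪ {a1} : Set U),
      ((x : U) = y ∨ ((x : U) = x0 ∧ (y : U) = a1) ∨ ((x : U) = a1 ∧ (y : U) = x0)) ↔
        E (f₁ x) (f₁ y))
    (hpr₂ : ∀ x y : (X ∪ {a2} : Set U),
      ((x : U) = y ∨ ((x : U) = x0 ∧ (y : U) = a2) ∨ ((x : U) = a2 ∧ (y : U) = x0)) ↔
        E (f₂ x) (f₂ y)) :
    f₁ ⟨a1, Set.mem_union_right _ (Set.mem_singleton a1)⟩ =
      f₂ ⟨a2, Set.mem_union_right _ (Set.mem_singleton a2)⟩ ∧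
    Set.range f₁ ∩ Set.range f₂ ≠ f₁ '' {x : (X ∪ {a1} : Set U) | (x : U) ∈ X} := by
  set p₁ : (X ∪ {a1} : Set U) := ⟨a1, Set.mem_union_right _ (Set.mem_singleton a1)⟩
  set p₂ : (X ∪ {a2} : Set U) := ⟨a2, Set.mem_union_right _ (Set.mem_singleton a2)⟩
  set q₁ : (X ∪ {a1} : Set U) := ⟨x0, Set.mem_union_left _ hx0⟩
  set q₂ : (X ∪ {a2} : Set U) := ⟨x0, Set.mem_union_left _ hx0⟩
  have hx0a1 : x0 ≠ a1 := ne_of_mem_of_not_mem hx0 ha1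
  have hx0a2 : x0 ≠ a2 := ne_of_mem_of_not_mem hx0 ha2
  have hq : f₁ q₁ = f₂ q₂ := hagree x0 hx0
  have hrefl : E (f₁ q₁) (f₁ q₁) := (hpr₁ q₁ q₁).1 (Or.inl rfl)
  have hE₁ : E (f₁ q₁) (f₁ p₁) := (hpr₁ q₁ p₁).1 (Or.inr (Or.inl ⟨rfl, rfl⟩))
  have hE₂ : E (f₁ q₁) (f₂ p₂) := hq ▸ (hpr₂ q₂ p₂).1 (Or.inr (Or.inl ⟨rfl, rfl⟩))
  have hne₁ : f₁ q₁ ≠ f₁ p₁ := fun h => hx0a1 (Subtype.ext_iff.1 (hinj₁ h))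
  have hne₂ : f₁ q₁ ≠ f₂ p₂ := fun h => hx0a2 (Subtype.ext_iff.1 (hinj₂ (hq ▸ h)))
  have hp : f₁ p₁ = f₂ p₂ := Set.eq_of_encard_le_two (hsmall _) hrefl hE₁ hE₂ hne₁ hne₂
  refine ⟨hp, fun h => ?_⟩
  obtain ⟨x, hxX, hx⟩ : f₁ p₁ ∈ f₁ '' {x : (X ∪ {a1} : Set U) | (x : U) ∈ X} :=
    h ▸ ⟨⟨p₁, rfl⟩, p₂, hp.symm⟩
  obtain rfl := hinj₁ hx
  exact ha1 hxX

/-- Disjoint amalgamation fails for equivalence relations with classes of size ≤ 2: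
any amalgam of the two one-point extensions adding a partner to 0 must identify
the two new points. -/
theorem stmt_4 {U : Type u} (X : Set U) (x0 : U) (hx0 : x0 ∈ X)
    (a1 a2 : U) (ha1 : a1 ∉ X) (ha2 : a2 ∉ X) (ha12 : a1 ≠ a2)
    (S : Type v) (E : S → S → Prop) (hE : Equivalence E)
    (hsmall : ∀ x, Set.encard {y | E x y} ≤ 2)
    (f₁ : (X ∪ {a1} : Set U) → S) (f₂ : (X ∪ {a2} : Set U) → S)
    (hinj₁ : Function.Injective f₁) (hinj₂ : Function.Injective f₂)
    (hagree : ∀ (x : U) (hx : x ∈ X),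
      f₁ ⟨x, Set.mem_union_left _ hx⟩ = f₂ ⟨x, Set.mem_union_left _ hx⟩)
    (hpr₁ : ∀ x y : (X ∪ {a1} : Set U),
      ((x : U) = y ∨ ((x : U) = x0 ∧ (y : U) = a1) ∨ ((x : U) = a1 ∧ (y : U) = x0)) ↔
        E (f₁ x) (f₁ y))
    (hpr₂ : ∀ x y : (X ∪ {a2} : Set U),
      ((x : U) = y ∨ ((x : U) = x0 ∧ (y : U) = a2) ∨ ((x : U) = a2 ∧ (y : U) = x0)) ↔
        E (f₂ x) (f₂ y)) :
    f₁ ⟨a1, Set.mem_union_right _ (Set.mem_singleton a1)⟩ =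
      f₂ ⟨a2, Set.mem_union_right _ (Set.mem_singleton a2)⟩ ∧
    Set.range f₁ ∩ Set.range f₂ ≠ f₁ '' {x : (X ∪ {a1} : Set U) | (x : U) ∈ X} :=
  stmt_4_general X x0 hx0 a1 a2 ha1 ha2 S E hsmall f₁ f₂ hinj₁ hinj₂ hagree hpr₁ hpr₂
end
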